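/- For the 3×3 branching matrix B₃ = [[q,0,0],[q²,q²,0],[q³,q³+1,q³]], the generating function (1 1 1)(I − tB₃)⁻¹(1 0 0)ᵀ equals (1 + q²t²)/((1−qt)(1−q²t)(1−q³t)). -/

import Mathlib

noncomputable section

/-- The field `ℚ(q,t)` of rational functions in two variables. -/
abbrev K : Type := FractionRing (MvPolynomial (Fin 2) ℚ)

/-- The variable `q`. -/
def qq : K := algebraMap (MvPolynomial (Fin 2) ℚ) K (MvPolynomial.X 0)

/-- The variable `t`. -/
def tt : K := algebraMap (MvPolynomial (Fin 2) ℚ) K (MvPolynomial.X 1)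

/-- The branching matrix `B₃ = [[q,0,0],[q²,q²,0],[q³,q³+1,q³]]` over `ℚ(q,t)`. -/
def B₃ : Matrix (Fin 3) (Fin 3) K :=
  !![qq, 0, 0; qq ^ 2, qq ^ 2, 0; qq ^ 3, qq ^ 3 + 1, qq ^ 3]

/-! Since `B₃` is lower triangular, `I − tB₃` has determinant `(1−qt)(1−q²t)(1−q³t)`, which is
nonzero in `ℚ(q,t)`, and forward substitution gives the first column of its inverse:
`(1/(1−qt), q²t/((1−qt)(1−q²t)), q²t(q+t)/((1−qt)(1−q²t)(1−q³t)))`. Over the common denominator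
the terms in `q²t`, `q³t` and `q⁵t²` cancel from the sum of these entries, leaving `1 + q²t²`. -/

namespace Matrix

variable {m R : Type*} [CommRing R]

theorem IsLowerTriangular.one_sub_smul [DecidableEq m] [Preorder m] {B : Matrix m m R}
    (hB : B.IsLowerTriangular) (t : R) : (1 - t • B).IsLowerTriangular :=
  blockTriangular_one.sub (b := OrderDual.toDual) fun _ _ hij => by simp [hB hij]

variable [Fintype m] [DecidableEq m]

theorem det_one_sub_smul_of_isLowerTriangular [LinearOrder m] {B : Matrix m m R}
    (hB : B.IsLowerTriangular) (t : R) : (1 - t • B).det = ∏ i, (1 - t * B i i) := by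
  simp [det_of_isLowerTriangular _ (hB.one_sub_smul t)]

theorem inv_col_eq_of_mulVec_eq_single {A : Matrix m m R} (hA : IsUnit A)
    {v : m → R} {j : m} (hv : A *ᵥ v = Pi.single j 1) : A⁻¹.col j = v := by
  rw [← mulVec_single_one, ← hv, mulVec_mulVec,
    nonsing_inv_mul A ((isUnit_iff_isUnit_det A).mp hA), one_mulVec]

end Matrix

open Matrix

theorem one_sub_qq_pow_mul_tt_ne_zero (n : ℕ) : 1 - qq ^ n * tt ≠ 0 := by
  have hpoly : (1 - MvPolynomial.X 0 ^ n * MvPolynomial.X 1 : MvPolynomial (Fin 2) ℚ) ≠ 0 :=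
    fun h => by simpa using congrArg MvPolynomial.constantCoeff h
  simpa [qq, tt] using (IsFractionRing.injective (MvPolynomial (Fin 2) ℚ) K).ne hpoly

theorem one_sub_qq_mul_tt_ne_zero : 1 - qq * tt ≠ 0 := by
  simpa using one_sub_qq_pow_mul_tt_ne_zero 1

theorem B₃_isLowerTriangular : B₃.IsLowerTriangular := by
  intro i j hij
  rw [OrderDual.toDual_lt_toDual] at hij
  fin_cases i <;> fin_cases j <;> simp_all [B₃]

theorem det_one_sub_smul_B₃ :
    (1 - tt • B₃).det = (1 - qq * tt) * (1 - qq ^ 2 * tt) * (1 - qq ^ 3 * tt) := by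
  rw [det_one_sub_smul_of_isLowerTriangular B₃_isLowerTriangular, Fin.prod_univ_three]
  simp only [B₃, of_apply, cons_val', cons_val_zero, cons_val_fin_one, cons_val_one, cons_val]
  ring

theorem isUnit_one_sub_smul_B₃ : IsUnit (1 - tt • B₃) := by
  rw [isUnit_iff_isUnit_det, det_one_sub_smul_B₃, isUnit_iff_ne_zero]
  exact mul_ne_zero (mul_ne_zero one_sub_qq_mul_tt_ne_zero (one_sub_qq_pow_mul_tt_ne_zero 2))
    (one_sub_qq_pow_mul_tt_ne_zero 3)

theorem inv_one_sub_smul_B₃_col_zero :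
    (1 - tt • B₃)⁻¹.col 0 =
      ![1 / (1 - qq * tt), qq ^ 2 * tt / ((1 - qq * tt) * (1 - qq ^ 2 * tt)),
        qq ^ 2 * tt * (qq + tt) / ((1 - qq * tt) * (1 - qq ^ 2 * tt) * (1 - qq ^ 3 * tt))] := by
  refine inv_col_eq_of_mulVec_eq_single isUnit_one_sub_smul_B₃ ?_
  have h1 := one_sub_qq_mul_tt_ne_zero
  have h2 := one_sub_qq_pow_mul_tt_ne_zero 2
  have h3 := one_sub_qq_pow_mul_tt_ne_zero 3
  ext i
  -- `mul_comm tt` turns the entries `t * qⁿ` of `t • B₃` into the shape `field_simp` knows to be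
  -- nonzero from `h1`, `h2`, `h3`.
  fin_cases i <;>
    simp [B₃, mulVec, dotProduct, Fin.sum_univ_three, one_apply, mul_comm tt] <;>
    field_simp <;> ring

/-- `I − tB₃` is invertible, and `(1 1 1)·(I − tB₃)⁻¹·(1 0 0)ᵀ`
equals `(1 + q²t²)/((1−qt)(1−q²t)(1−q³t))`. -/
theorem genfun_three :
    IsUnit (1 - tt • B₃) ∧
    (∑ i : Fin 3, (1 - tt • B₃)⁻¹ i 0) =
      (1 + qq ^ 2 * tt ^ 2) /
        ((1 - qq * tt) * (1 - qq ^ 2 * tt) * (1 - qq ^ 3 * tt)) := by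
  refine ⟨isUnit_one_sub_smul_B₃, ?_⟩
  simp only [Fin.sum_univ_three, ← col_apply (1 - tt • B₃)⁻¹, inv_one_sub_smul_B₃_col_zero,
    cons_val_zero, cons_val_one, cons_val_two, head_cons, tail_cons]
  have h1 := one_sub_qq_mul_tt_ne_zero
  have h2 := one_sub_qq_pow_mul_tt_ne_zero 2
  have h3 := one_sub_qq_pow_mul_tt_ne_zero 3
  field_simp
  ring

end
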